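/- arXiv:2003.08794 — 2 statements merged into one kernel-verified Lean document; each statement's English description precedes it below -/
import Mathlib

section
/- Let C > 0, s > 1, and define for κ ∈ (0,1) the function t ↦ κ^{1/2} t^{1/s − 1/2} (e^{C t^{(s−1)/s}} − 1) on (0,∞). For every α ∈ (0,1) there exist c > 0 and κ_0 ∈ (0,1) such that for all κ < κ_0 and all t with 0 < t ≤ c (log(1/κ))^{s/(s−1)}, one has κ^{1/2} t^{1/s − 1/2} (e^{C t^{(s−1)/s}} − 1) ≤ κ^{(1−α)/2}. -/
/-!
Put `L = log (1/κ)`, `q = s/(s-1)` and `x = C t^{(s-1)/s}`. Since `e^x - 1 ≤ x e^x`, the quantity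
is at most `κ^{1/2} C t^{1/2} e^x`. Taking `c = (β/C)^q` with `β = α/4`, the constraint on `t`
gives `x ≤ β L` and `t^{1/2} ≤ c^{1/2} L^{q/2}`, so the quantity is at most
`κ^{1/2} e^{βL} · C c^{1/2} L^{q/2}`. For `κ` small the polynomial factor `C c^{1/2} L^{q/2}` is
beaten by `e^{βL} = κ^{-β}`, leaving `κ^{1/2 - 2β} = κ^{(1-α)/2}`.
-/

open Real Filter Topology Set

lemma Real.exp_sub_one_le_mul_exp (x : ℝ) : exp x - 1 ≤ x * exp x := by
  have h := mul_le_mul_of_nonneg_right (one_sub_le_exp_neg x) (exp_pos x).le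
  rw [← exp_add, neg_add_cancel, exp_zero] at h
  linarith

lemma Real.rpow_mul_exp_sub_one_le {s t : ℝ} (C : ℝ) (hs : s ≠ 0) (ht : 0 < t) :
    t ^ (1 / s - 1 / 2) * (exp (C * t ^ ((s - 1) / s)) - 1) ≤
      C * t ^ ((1 : ℝ) / 2) * exp (C * t ^ ((s - 1) / s)) := by
  have hsplit : t ^ (1 / s - 1 / 2) * t ^ ((s - 1) / s) = t ^ ((1 : ℝ) / 2) := by
    rw [← rpow_add ht]
    congr 1
    field_simp
    ring
  calc t ^ (1 / s - 1 / 2) * (exp (C * t ^ ((s - 1) / s)) - 1)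
      ≤ t ^ (1 / s - 1 / 2) * (C * t ^ ((s - 1) / s) * exp (C * t ^ ((s - 1) / s))) :=
        mul_le_mul_of_nonneg_left (exp_sub_one_le_mul_exp _) (rpow_nonneg ht.le _)
    _ = C * t ^ ((1 : ℝ) / 2) * exp (C * t ^ ((s - 1) / s)) := by
        rw [← hsplit]; ring

lemma Real.rpow_le_mul_of_le_rpow_mul_rpow {t a L q r : ℝ} (ht : 0 ≤ t) (ha : 0 ≤ a)
    (hL : 0 ≤ L) (hr : 0 ≤ r) (hqr : q * r = 1) (h : t ≤ a ^ q * L ^ q) : t ^ r ≤ a * L := by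
  calc t ^ r ≤ (a ^ q * L ^ q) ^ r := rpow_le_rpow ht h hr
    _ = a * L := by rw [← mul_rpow ha hL, ← rpow_mul (mul_nonneg ha hL), hqr, rpow_one]

lemma Real.rpow_mul_exp_sub_one_le_of_le_mul_rpow {C s β L t : ℝ} (hC : 0 < C) (hs : 1 < s)
    (hβ : 0 ≤ β) (hL : 0 ≤ L) (ht : 0 < t)
    (htL : t ≤ (β / C) ^ (s / (s - 1)) * L ^ (s / (s - 1))) :
    t ^ (1 / s - 1 / 2) * (exp (C * t ^ ((s - 1) / s)) - 1) ≤
      C * ((β / C) ^ (s / (s - 1))) ^ ((1 : ℝ) / 2) * L ^ (s / (s - 1) / 2) * exp (β * L) := by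
  have hqr : s / (s - 1) * ((s - 1) / s) = 1 := by
    field_simp [(by linarith : s - 1 ≠ 0)]
  have hexponent : C * t ^ ((s - 1) / s) ≤ β * L := by
    have := rpow_le_mul_of_le_rpow_mul_rpow ht.le (by positivity) hL
      (div_nonneg (by linarith) (by linarith)) hqr htL
    calc C * t ^ ((s - 1) / s) ≤ C * (β / C * L) := by gcongr
      _ = β * L := by field_simp
  have hsqrt : t ^ ((1 : ℝ) / 2) ≤
      ((β / C) ^ (s / (s - 1))) ^ ((1 : ℝ) / 2) * L ^ (s / (s - 1) / 2) := by
    calc t ^ ((1 : ℝ) / 2) ≤ ((β / C) ^ (s / (s - 1)) * L ^ (s / (s - 1))) ^ ((1 : ℝ) / 2) :=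
          rpow_le_rpow ht.le htL (by norm_num)
      _ = _ := by rw [mul_rpow (by positivity) (rpow_nonneg hL _), ← rpow_mul hL, mul_one_div]
  calc t ^ (1 / s - 1 / 2) * (exp (C * t ^ ((s - 1) / s)) - 1)
      ≤ C * t ^ ((1 : ℝ) / 2) * exp (C * t ^ ((s - 1) / s)) :=
        rpow_mul_exp_sub_one_le C (by positivity) ht
    _ ≤ C * (((β / C) ^ (s / (s - 1))) ^ ((1 : ℝ) / 2) * L ^ (s / (s - 1) / 2)) * exp (β * L) := by
        gcongr
    _ = _ := by ring

lemma Real.eventually_const_mul_rpow_le_exp (K p : ℝ) {b : ℝ} (hb : 0 < b) :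
    ∀ᶠ x in atTop, K * x ^ p ≤ exp (b * x) := by
  filter_upwards [((isLittleO_rpow_exp_pos_mul_atTop p hb).const_mul_left K).bound one_pos,
    eventually_ge_atTop 0] with x hx hx0
  simpa [norm_mul, abs_of_nonneg (rpow_nonneg hx0 p)] using (le_abs_self _).trans hx

lemma Real.tendsto_log_one_div_nhdsGT_zero : Tendsto (fun κ ↦ log (1 / κ)) (𝓝[>] 0) atTop := by
  simpa only [one_div, log_inv, Function.comp_def] using
    tendsto_neg_atBot_atTop.comp tendsto_log_nhdsGT_zero

lemma Real.exp_mul_log_one_div {κ : ℝ} (hκ : 0 < κ) (β : ℝ) :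
    exp (β * log (1 / κ)) = κ ^ (-β) := by
  rw [rpow_def_of_pos hκ, one_div, log_inv]
  ring_nf

lemma Real.eventually_const_mul_log_one_div_rpow_le_rpow_neg (K p : ℝ) {β : ℝ} (hβ : 0 < β) :
    ∀ᶠ κ in 𝓝[>] 0, K * log (1 / κ) ^ p ≤ κ ^ (-β) := by
  filter_upwards [tendsto_log_one_div_nhdsGT_zero.eventually
    (eventually_const_mul_rpow_le_exp K p hβ), self_mem_nhdsWithin] with κ hκ hκ0
  rwa [← exp_mul_log_one_div hκ0]

lemma exists_Ioo_forall_of_eventually_nhdsGT {a b : ℝ} (hab : a < b) {P : ℝ → Prop}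
    (h : ∀ᶠ x in 𝓝[>] a, P x) : ∃ u ∈ Ioo a b, ∀ x, a < x → x < u → P x := by
  obtain ⟨u, hu, hsub⟩ := (mem_nhdsGT_iff_exists_mem_Ioc_Ioo_subset hab).mp h
  obtain ⟨v, hav, hvu⟩ := exists_between (mem_Ioc.mp hu).1
  exact ⟨v, ⟨hav, hvu.trans_le (mem_Ioc.mp hu).2⟩,
    fun x hax hxv ↦ hsub ⟨hax, hxv.trans hvu⟩⟩

theorem stmt13_general (C s α : ℝ) (hC : 0 < C) (hs : 1 < s) (hα0 : 0 < α) :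
    ∃ c > (0:ℝ), ∃ κ₀ ∈ Set.Ioo (0:ℝ) 1, ∀ κ : ℝ, 0 < κ → κ < κ₀ →
      ∀ t : ℝ, 0 < t → t ≤ c * Real.log (1/κ) ^ (s/(s - 1)) →
        κ ^ ((1:ℝ)/2) * t ^ (1/s - 1/2) * (Real.exp (C * t ^ ((s - 1)/s)) - 1) ≤
          κ ^ ((1 - α)/2) := by
  set β := α / 4 with hβ
  set c := (β / C) ^ (s / (s - 1))
  obtain ⟨κ₀, hκ₀, hpoly⟩ := exists_Ioo_forall_of_eventually_nhdsGT zero_lt_one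
    (eventually_const_mul_log_one_div_rpow_le_rpow_neg (C * c ^ ((1 : ℝ) / 2)) (s / (s - 1) / 2)
      (by positivity : 0 < β))
  refine ⟨c, by positivity, κ₀, hκ₀, fun κ hκ hκκ₀ t ht htc ↦ ?_⟩
  have hL : 0 ≤ log (1 / κ) := log_nonneg ((one_le_div hκ).mpr (hκκ₀.trans hκ₀.2).le)
  calc κ ^ ((1 : ℝ) / 2) * t ^ (1 / s - 1 / 2) * (exp (C * t ^ ((s - 1) / s)) - 1)
      ≤ κ ^ ((1 : ℝ) / 2) *
          (C * c ^ ((1 : ℝ) / 2) * log (1 / κ) ^ (s / (s - 1) / 2) * exp (β * log (1 / κ))) := by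
        rw [mul_assoc]
        exact mul_le_mul_of_nonneg_left
          (rpow_mul_exp_sub_one_le_of_le_mul_rpow hC hs (by positivity) hL ht htc) (by positivity)
    _ ≤ κ ^ ((1 : ℝ) / 2) * (κ ^ (-β) * κ ^ (-β)) := by
        rw [exp_mul_log_one_div hκ]
        gcongr
        exact hpoly κ hκ hκκ₀
    _ = κ ^ ((1 - α) / 2) := by
        rw [← rpow_add hκ, ← rpow_add hκ, hβ]
        ring_nf

/-- Let `C > 0`, `s > 1`. For every `α ∈ (0,1)` there exist `c > 0` and
`κ₀ ∈ (0,1)` such that for all `κ < κ₀` and all `t` with `0 < t ≤ c (log (1/κ))^{s/(s-1)}`,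
`κ^{1/2} t^{1/s - 1/2} (exp (C t^{(s-1)/s}) - 1) ≤ κ^{(1-α)/2}`. -/
theorem stmt13 (C s α : ℝ) (hC : 0 < C) (hs : 1 < s) (hα0 : 0 < α) (hα1 : α < 1) :
    ∃ c > (0:ℝ), ∃ κ₀ ∈ Set.Ioo (0:ℝ) 1, ∀ κ : ℝ, 0 < κ → κ < κ₀ →
      ∀ t : ℝ, 0 < t → t ≤ c * Real.log (1/κ) ^ (s/(s - 1)) →
        κ ^ ((1:ℝ)/2) * t ^ (1/s - 1/2) * (Real.exp (C * t ^ ((s - 1)/s)) - 1) ≤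
          κ ^ ((1 - α)/2) :=
  stmt13_general C s α hC hs hα0
end

section
/- Let s ∈ (1, 2), κ ∈ (0,1), and suppose D ∈ (0,1) satisfies both a preliminary bound D ≤ C₁ (log(1/κ))^{−2} and the refined inequality log(1/δ) ≤ C₂ D^{−(s−1)/s} with δ = κ^{1/2} D^{1/2 − 1/s}. Then there are constants κ₀ ∈ (0,1) and C₃ (depending only on C₁, C₂, s) such that for κ < κ₀, D ≤ C₃ (log(1/κ))^{−s/(s−1)}. -/
/-!
If `D ≤ log(1/κ)^(-s/(s-1))` there is nothing to prove. Otherwise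
`log D > -(s/(s-1)) log log(1/κ)`, so the correction `(1/2 - 1/s) log D` in
`log(1/δ) = log(1/κ)/2 - (1/2 - 1/s) log D` is only of order `log log(1/κ)` and is absorbed by
`log(1/κ)/4` once κ is small. Hence `log(1/κ)/4 ≤ C₂ D^(-(s-1)/s)`, which inverts to
`D ≲ log(1/κ)^(-s/(s-1))`.
-/

open Real

lemma mul_log_le_div_four {c L : ℝ} (hc : 0 ≤ c) (hL : 0 ≤ L) (hcL : 64 * c ^ 2 ≤ L) :
    c * log L ≤ L / 4 := by
  have hlog : log L ≤ 2 * √L := by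
    simpa [sqrt_eq_rpow, div_eq_mul_inv, mul_comm] using
      log_le_rpow_div hL (by norm_num : (0:ℝ) < 1 / 2)
  have hsqrt : 8 * c ≤ √L := le_sqrt_of_sq_le (by linarith)
  nlinarith [mul_self_sqrt hL, sqrt_nonneg L]

lemma log_one_div_rpow_mul_rpow {κ D : ℝ} (hκ : 0 < κ) (hD : 0 < D) (a b : ℝ) :
    log (1 / (κ ^ a * D ^ b)) = a * log (1 / κ) - b * log D := by
  rw [one_div, log_inv, log_mul (rpow_pos_of_pos hκ a).ne' (rpow_pos_of_pos hD b).ne',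
    log_rpow hκ, log_rpow hD, one_div, log_inv]
  ring

lemma le_mul_rpow_of_le_mul_rpow_neg {a C D p : ℝ} (ha : 0 < a) (hD : 0 < D) (hp : 0 < p)
    (h : a ≤ C * D ^ (-p)) : D ≤ C ^ p⁻¹ * a ^ (-p⁻¹) := by
  have hDp : 0 < D ^ p := rpow_pos_of_pos hD p
  have hDp_le : D ^ p ≤ C / a := by
    rw [rpow_neg hD.le, ← div_eq_mul_inv] at h
    rw [le_div_iff₀ ha, mul_comm]
    exact (le_div_iff₀ hDp).mp h
  have hC : 0 ≤ C := ((div_pos_iff_of_pos_right ha).mp (hDp.trans_le hDp_le)).le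
  calc D = (D ^ p) ^ p⁻¹ := (rpow_rpow_inv hD.le hp.ne').symm
    _ ≤ (C / a) ^ p⁻¹ := rpow_le_rpow hDp.le hDp_le (inv_nonneg.mpr hp.le)
    _ = C ^ p⁻¹ * a ^ (-p⁻¹) := by
      rw [div_rpow hC ha.le, rpow_neg ha.le, div_eq_mul_inv]

/-- For `1 < s < 2` the coefficient `1/2 - 1/s` is negative, so a lower bound on `D` is an
upper bound on `(1/2 - 1/s) log D`. -/
lemma half_sub_inv_mul_log_le {s L D : ℝ} (hs1 : 1 < s) (hs2 : s < 2) (hL : 0 < L)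
    (hsL : 64 * ((2 - s) / (2 * (s - 1))) ^ 2 ≤ L) (hD : L ^ (-(s / (s - 1))) < D) :
    (1 / 2 - 1 / s) * log D ≤ L / 4 := by
  have hs0 : 0 < s := by linarith
  have hs1' : 0 < s - 1 := by linarith
  have hneg : 1 / 2 - 1 / s < 0 := by
    rw [sub_neg, div_lt_div_iff₀ (by norm_num) hs0]
    linarith
  have hlogD : -(s / (s - 1)) * log L < log D := by
    rw [← log_rpow hL]
    exact log_lt_log (rpow_pos_of_pos hL _) hD
  have hcoeff : (1 / 2 - 1 / s) * -(s / (s - 1)) = (2 - s) / (2 * (s - 1)) := by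
    field_simp
    ring
  calc (1 / 2 - 1 / s) * log D ≤ (1 / 2 - 1 / s) * (-(s / (s - 1)) * log L) :=
        mul_le_mul_of_nonpos_left hlogD.le hneg.le
    _ = (2 - s) / (2 * (s - 1)) * log L := by rw [← mul_assoc, hcoeff]
    _ ≤ L / 4 := mul_log_le_div_four (div_nonneg (by linarith) (by linarith)) hL.le hsL

theorem stmt18_general (s C₁ C₂ : ℝ) (hs1 : 1 < s) (hs2 : s < 2) :
    ∃ κ₀ ∈ Set.Ioo (0:ℝ) 1, ∃ C₃ > (0:ℝ), ∀ κ D : ℝ, 0 < κ → κ < κ₀ → 0 < D → D < 1 →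
      D ≤ C₁ * Real.log (1/κ) ^ (-(2:ℝ)) →
      Real.log (1 / (κ ^ ((1:ℝ)/2) * D ^ (1/2 - 1/s))) ≤ C₂ * D ^ (-((s - 1)/s)) →
      D ≤ C₃ * Real.log (1/κ) ^ (-(s/(s - 1))) := by
  set L₀ := 64 * ((2 - s) / (2 * (s - 1))) ^ 2 + 1
  have hL₀ : 0 < L₀ := by positivity
  refine ⟨exp (-L₀), ⟨exp_pos _, exp_lt_one_iff.mpr (neg_lt_zero.mpr hL₀)⟩,
    max 1 ((4 * C₂) ^ (s / (s - 1))), one_pos.trans_le (le_max_left _ _), ?_⟩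
  intro κ D hκ hκ₀ hD _ _ href
  have hL : L₀ < log (1 / κ) := by
    rw [one_div, log_inv, lt_neg, ← log_exp (-L₀)]
    exact log_lt_log hκ hκ₀
  set L := log (1 / κ)
  have hLq : 0 ≤ L ^ (-(s / (s - 1))) := rpow_nonneg (hL₀.trans hL).le _
  rcases le_or_gt D (L ^ (-(s / (s - 1)))) with hsmall | hlarge
  · exact hsmall.trans (le_mul_of_one_le_left hLq (le_max_left _ _))
  have hmain : L ≤ 4 * C₂ * D ^ (-((s - 1) / s)) := by
    rw [log_one_div_rpow_mul_rpow hκ hD] at href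
    linarith [half_sub_inv_mul_log_le hs1 hs2 (hL₀.trans hL) (by linarith) hlarge]
  have hp : 0 < (s - 1) / s := div_pos (by linarith) (by linarith)
  calc D ≤ (4 * C₂) ^ (s / (s - 1)) * L ^ (-(s / (s - 1))) := by
        simpa only [inv_div] using le_mul_rpow_of_le_mul_rpow_neg (hL₀.trans hL) hD hp hmain
    _ ≤ max 1 ((4 * C₂) ^ (s / (s - 1))) * L ^ (-(s / (s - 1))) :=
        mul_le_mul_of_nonneg_right (le_max_right _ _) hLq

/-- Let `s ∈ (1,2)`, `κ ∈ (0,1)`, and suppose `D ∈ (0,1)` satisfies both the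
preliminary bound `D ≤ C₁ (log (1/κ))^{-2}` and the refined inequality
`log (1/δ) ≤ C₂ D^{-(s-1)/s}` with `δ = κ^{1/2} D^{1/2 - 1/s}`. Then there are `κ₀ ∈ (0,1)`
and `C₃`, depending only on `C₁, C₂, s`, such that for `κ < κ₀`,
`D ≤ C₃ (log (1/κ))^{-s/(s-1)}`. -/
theorem stmt18 (s C₁ C₂ : ℝ) (hs1 : 1 < s) (hs2 : s < 2) (hC₁ : 0 < C₁) (hC₂ : 0 < C₂) :
    ∃ κ₀ ∈ Set.Ioo (0:ℝ) 1, ∃ C₃ > (0:ℝ), ∀ κ D : ℝ, 0 < κ → κ < κ₀ → 0 < D → D < 1 →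
      D ≤ C₁ * Real.log (1/κ) ^ (-(2:ℝ)) →
      Real.log (1 / (κ ^ ((1:ℝ)/2) * D ^ (1/2 - 1/s))) ≤ C₂ * D ^ (-((s - 1)/s)) →
      D ≤ C₃ * Real.log (1/κ) ^ (-(s/(s - 1))) :=
  stmt18_general s C₁ C₂ hs1 hs2
end
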